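/- (The SPO+ loss is an upper bound on the SPO loss.) For all ŷ, y ∈ ℝ^d: ℓ_SPO(ŷ, y) ≤ ℓ_SPO+(ŷ, y). -/

import Mathlib

open MeasureTheory
open scoped RealInnerProductSpace

noncomputable section

/-- The SPO loss: `ℓ_SPO(ŷ, y) = ⟨y, w*(ŷ)⟩ − ⟨y, w*(y)⟩`. -/
def lSPO {d : ℕ} (wStar : EuclideanSpace ℝ (Fin d) → EuclideanSpace ℝ (Fin d))
    (yhat y : EuclideanSpace ℝ (Fin d)) : ℝ :=
  ⟪y, wStar yhat⟫ - ⟪y, wStar y⟫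

/-- The SPO+ loss: `ℓ_SPO+(ŷ, y) = sup_{w ∈ S} ⟨y − 2ŷ, w⟩ + 2⟨ŷ, w*(y)⟩ − ⟨y, w*(y)⟩`. -/
def lSPOplus {d : ℕ} (S : Set (EuclideanSpace ℝ (Fin d)))
    (wStar : EuclideanSpace ℝ (Fin d) → EuclideanSpace ℝ (Fin d))
    (yhat y : EuclideanSpace ℝ (Fin d)) : ℝ :=
  sSup ((fun w => ⟪y - (2 : ℝ) • yhat, w⟫) '' S) + 2 * ⟪yhat, wStar y⟫ - ⟪y, wStar y⟫

/-!
Bounding the supremum in `ℓ_SPO+(ŷ, y)` below by its value at `w = w*(ŷ)` gives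
`ℓ_SPO+(ŷ, y) ≥ ℓ_SPO(ŷ, y) + 2 (⟨ŷ, w*(y)⟩ − ⟨ŷ, w*(ŷ)⟩)`, and the bracket is nonnegative
because `w*(ŷ)` minimises `⟨ŷ, ·⟩` over `S`. Compactness of `S` is what makes the supremum a
true supremum: `sSup` of a set unbounded above is `0`.
-/

theorem IsCompact.inner_le_sSup_image_inner {E : Type*} [NormedAddCommGroup E]
    [InnerProductSpace ℝ E] {S : Set E} (hS : IsCompact S) (c : E) {w : E} (hw : w ∈ S) :
    ⟪c, w⟫ ≤ sSup ((fun v => ⟪c, v⟫) '' S) :=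
  le_csSup (hS.image (continuous_const.inner continuous_id)).bddAbove (Set.mem_image_of_mem _ hw)

theorem lSPO_add_le_lSPOplus {d : ℕ} {S : Set (EuclideanSpace ℝ (Fin d))} (hS : IsCompact S)
    {wStar : EuclideanSpace ℝ (Fin d) → EuclideanSpace ℝ (Fin d)}
    {yhat : EuclideanSpace ℝ (Fin d)} (hyhat : wStar yhat ∈ S) (y : EuclideanSpace ℝ (Fin d)) :
    lSPO wStar yhat y + 2 * (⟪yhat, wStar y⟫ - ⟪yhat, wStar yhat⟫) ≤
      lSPOplus S wStar yhat y := by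
  have hsup := hS.inner_le_sSup_image_inner (y - (2 : ℝ) • yhat) hyhat
  rw [inner_sub_left, real_inner_smul_left] at hsup
  unfold lSPO lSPOplus
  linarith

theorem spo_le_spoPlus_general {d : ℕ} (S : Set (EuclideanSpace ℝ (Fin d)))
    (hSc : IsCompact S)
    (wStar : EuclideanSpace ℝ (Fin d) → EuclideanSpace ℝ (Fin d))
    (hOracle : ∀ c : EuclideanSpace ℝ (Fin d),
      wStar c ∈ S ∧ ∀ w ∈ S, ⟪c, wStar c⟫ ≤ ⟪c, w⟫) :
    ∀ yhat y : EuclideanSpace ℝ (Fin d),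
      lSPO wStar yhat y ≤ lSPOplus S wStar yhat y := by
  intro yhat y
  have hgap : ⟪yhat, wStar yhat⟫ ≤ ⟪yhat, wStar y⟫ := (hOracle yhat).2 _ (hOracle y).1
  linarith [lSPO_add_le_lSPOplus hSc (hOracle yhat).1 y]

/-- The SPO+ loss is an upper bound on the SPO loss. -/
theorem spo_le_spoPlus {d : ℕ} (S : Set (EuclideanSpace ℝ (Fin d)))
    (hS : S.Nonempty) (hSc : IsCompact S)
    (wStar : EuclideanSpace ℝ (Fin d) → EuclideanSpace ℝ (Fin d))
    (hOracle : ∀ c : EuclideanSpace ℝ (Fin d),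
      wStar c ∈ S ∧ ∀ w ∈ S, ⟪c, wStar c⟫ ≤ ⟪c, w⟫) :
    ∀ yhat y : EuclideanSpace ℝ (Fin d),
      lSPO wStar yhat y ≤ lSPOplus S wStar yhat y :=
  spo_le_spoPlus_general S hSc wStar hOracle
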